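/- Given a cospan of lenses (f, φ) : A ⇌ B ⇋ C : (g, γ), the 'fake pullback' square in Lens — given by the span of lenses (π₀, 1×γ) : A ×_B C ⇌ A and (π₁, φ×1) : A ×_B C ⇌ C — commutes in Lens: the composite lens (f, φ) ∘ (π₀, 1×γ) equals the composite lens (g, γ) ∘ (π₁, φ×1), both being the lens A ×_B C ⇌ B with Get f∘π₀ and Put sending (⟨a,c⟩, u) to (φ(a,u), γ(c,u)). -/

import Mathlib

open CategoryTheory

universe w v u v₁ u₁ v₂ u₂ v₃ u₃

section Helpers

/-- The hom-type of a category structure, given explicitly. -/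
def homOf {C : Type u₁} (cc : Category.{v₁} C) (x y : C) : Type v₁ :=
  @Quiver.Hom C cc.toCategoryStruct.toQuiver x y

/-- Object part of a functor, with explicit category structures. -/
def objOf {C : Type u₁} {D : Type u₂} (cc : Category.{v₁} C) (cd : Category.{v₂} D)
    (F : @Functor C cc D cd) : C → D := F.obj

/-- Morphism part of a functor, with explicit category structures. -/
def mapOf {C : Type u₁} {D : Type u₂} (cc : Category.{v₁} C) (cd : Category.{v₂} D)
    (F : @Functor C cc D cd) {x y : C} (u : homOf cc x y) :
    homOf cd (objOf cc cd F x) (objOf cc cd F y) := F.map u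

/-- Discrete opfibration: every morphism out of the image of an object has a unique
lift with that source. -/
def IsDiscreteOpfibration {X : Type u₁} {Y : Type u₂} (cx : Category.{v₁} X)
    (cy : Category.{v₂} Y) (F : @Functor X cx Y cy) : Prop :=
  ∀ (x : X) (y : Y) (u : homOf cy (objOf cx cy F x) y),
    ∃! t : (Σ x' : X, homOf cx x x'),
      objOf cx cy F t.1 = y ∧ HEq (mapOf cx cy F t.2) u

/-- Fully faithful, as a property. -/
def IsFullyFaithfulP {X : Type u₁} {Y : Type u₂} (cx : Category.{v₁} X)
    (cy : Category.{v₂} Y) (F : @Functor X cx Y cy) : Prop :=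
  ∀ (x x' : X) (u : homOf cy (objOf cx cy F x) (objOf cx cy F x')),
    ∃! w : homOf cx x x', mapOf cx cy F w = u

end Helpers
/-- An asymmetric delta lens `A ⇌ B`: a Get functor together with a Put operation
lifting morphisms of `B` out of `get.obj a` to morphisms of `A` out of `a`, satisfying
the PutGet, GetPut and PutPut laws. -/
structure Lens (A : Type u₁) (B : Type u₂) [Category.{v₁} A] [Category.{v₂} B] where
  get : A ⥤ B
  tgt : ∀ (a : A) {b : B}, (get.obj a ⟶ b) → A
  put : ∀ (a : A) {b : B} (u : get.obj a ⟶ b), a ⟶ tgt a u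
  obj_tgt : ∀ (a : A) {b : B} (u : get.obj a ⟶ b), get.obj (tgt a u) = b
  putget : ∀ (a : A) {b : B} (u : get.obj a ⟶ b), HEq (get.map (put a u)) u
  tgt_id : ∀ a : A, tgt a (𝟙 (get.obj a)) = a
  getput : ∀ a : A, HEq (put a (𝟙 (get.obj a))) (𝟙 a)
  tgt_comp : ∀ (a : A) {b c : B} (u : get.obj a ⟶ b) (v : b ⟶ c)
    (v' : get.obj (tgt a u) ⟶ c), HEq v' v → tgt a (u ≫ v) = tgt (tgt a u) v'
  putput : ∀ (a : A) {b c : B} (u : get.obj a ⟶ b) (v : b ⟶ c)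
    (v' : get.obj (tgt a u) ⟶ c), HEq v' v →
    HEq (put a (u ≫ v)) (put a u ≫ put (tgt a u) v')
section Pullback

variable {A B C : Type u} [Category.{v} A] [Category.{v} B] [Category.{v} C]

/-- The pullback of two functors in `Cat`: objects are pairs whose images agree. -/
def PB (f : A ⥤ B) (g : C ⥤ B) : Type u := { p : A × C // f.obj p.1 = g.obj p.2 }

/-- Morphisms in the pullback category: pairs of morphisms whose images agree. -/
@[ext] structure PBHom {f : A ⥤ B} {g : C ⥤ B} (x y : PB f g) where
  m1 : x.1.1 ⟶ y.1.1
  m2 : x.1.2 ⟶ y.1.2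
  w : f.map m1 ≫ eqToHom y.2 = eqToHom x.2 ≫ g.map m2

instance PB.category (f : A ⥤ B) (g : C ⥤ B) : Category.{v} (PB f g) where
  Hom x y := PBHom x y
  id x := ⟨𝟙 _, 𝟙 _, by simp⟩
  comp m n := ⟨m.m1 ≫ n.m1, m.m2 ≫ n.m2, by
    rw [Functor.map_comp, Functor.map_comp, Category.assoc, n.w, ← Category.assoc,
      m.w, Category.assoc]⟩
  id_comp m := by apply PBHom.ext <;> simp
  comp_id m := by apply PBHom.ext <;> simp
  assoc m n o := by apply PBHom.ext <;> simp

/-- The first projection of the pullback. -/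
def PB.proj₁ (f : A ⥤ B) (g : C ⥤ B) : PB f g ⥤ A where
  obj x := x.1.1
  map m := m.m1

/-- The second projection of the pullback. -/
def PB.proj₂ (f : A ⥤ B) (g : C ⥤ B) : PB f g ⥤ C where
  obj x := x.1.2
  map m := m.m2

end Pullback

/-! Both composites have Get `f ∘ π₀ = g ∘ π₁`. At `(⟨a, c⟩, u)` the composite through `A` puts
`u` to `φ(a, u)` and then `γ(c, f φ(a, u))`, and `f φ(a, u) = u` by PutGet; symmetrically the
composite through `C` gives `(φ(a, g γ(c, u)), γ(c, u)) = (φ(a, u), γ(c, u))`. Everything else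
is transport along the equations `f a = g c`. -/

theorem CategoryTheory.Functor.map_heq_of_heq {A : Type u₁} {B : Type u₂} [Category.{v₁} A]
    [Category.{v₂} B] (F : A ⥤ B) {a a' a'' : A} {f : a ⟶ a'} {f' : a ⟶ a''} (h : a' = a'')
    (hf : f ≍ f') : F.map f ≍ F.map f' := by
  subst h; rw [eq_of_heq hf]

namespace Lens

section Laws

variable {A : Type u₁} {B : Type u₂} [Category.{v₁} A] [Category.{v₂} B] (l : Lens A B)

theorem tgt_congr {a a' : A} {b b' : B} {u : l.get.obj a ⟶ b} {u' : l.get.obj a' ⟶ b'}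
    (ha : a = a') (hb : b = b') (hu : u ≍ u') : l.tgt a u = l.tgt a' u' := by
  subst ha hb; rw [eq_of_heq hu]

theorem put_congr {a a' : A} {b b' : B} {u : l.get.obj a ⟶ b} {u' : l.get.obj a' ⟶ b'}
    (ha : a = a') (hb : b = b') (hu : u ≍ u') : l.put a u ≍ l.put a' u' := by
  subst ha hb; rw [eq_of_heq hu]

theorem map_put (a : A) {b : B} (u : l.get.obj a ⟶ b) :
    l.get.map (l.put a u) = u ≫ eqToHom (l.obj_tgt a u).symm := by
  rw [← heq_iff_eq, heq_comp_eqToHom_iff]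
  exact l.putget a u

theorem eqToHom_comp_map_put_heq {a : A} {b b' : B} (h : b' = l.get.obj a)
    (u : l.get.obj a ⟶ b) : eqToHom h ≫ l.get.map (l.put a u) ≍ u :=
  (eqToHom_comp_heq _ _).trans (l.putget a u)

theorem tgt_comp' (a : A) {b c c' : B} (u : l.get.obj a ⟶ b) (v : b ⟶ c)
    (v' : l.get.obj (l.tgt a u) ⟶ c') (hc : c' = c) (hv : v' ≍ v) :
    l.tgt a (u ≫ v) = l.tgt (l.tgt a u) v' := by
  subst hc; exact l.tgt_comp a u v v' hv

theorem putput' (a : A) {b c c' : B} (u : l.get.obj a ⟶ b) (v : b ⟶ c)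
    (v' : l.get.obj (l.tgt a u) ⟶ c') (hc : c' = c) (hv : v' ≍ v) :
    l.put a (u ≫ v) ≍ l.put a u ≫ l.put (l.tgt a u) v' := by
  subst hc; exact l.putput a u v v' hv

variable {D : Type u₃} [Category.{v₃} D] (f : D ⥤ B) (a : A)

theorem tgt_eqToHom_comp_map_id {d : D} (h : l.get.obj a = f.obj d) :
    l.tgt a (eqToHom h ≫ f.map (𝟙 d)) = a := by
  rw [f.map_id, Category.comp_id]
  exact (l.tgt_congr rfl h.symm (eqToHom_heq_id_dom _ _ h)).trans (l.tgt_id a)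

theorem put_eqToHom_comp_map_id {d : D} (h : l.get.obj a = f.obj d) :
    l.put a (eqToHom h ≫ f.map (𝟙 d)) ≍ 𝟙 a := by
  rw [f.map_id, Category.comp_id]
  exact (l.put_congr rfl h.symm (eqToHom_heq_id_dom _ _ h)).trans (l.getput a)

theorem tgt_eqToHom_comp_map_comp {d₀ d₁ d₂ : D} (h : l.get.obj a = f.obj d₀) (u : d₀ ⟶ d₁)
    (v : d₁ ⟶ d₂) (h' : l.get.obj (l.tgt a (eqToHom h ≫ f.map u)) = f.obj d₁) :
    l.tgt a (eqToHom h ≫ f.map (u ≫ v)) =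
      l.tgt (l.tgt a (eqToHom h ≫ f.map u)) (eqToHom h' ≫ f.map v) := by
  rw [f.map_comp, ← Category.assoc]
  exact l.tgt_comp _ _ _ _ (eqToHom_comp_heq _ _)

theorem put_eqToHom_comp_map_comp {d₀ d₁ d₂ : D} (h : l.get.obj a = f.obj d₀) (u : d₀ ⟶ d₁)
    (v : d₁ ⟶ d₂) (h' : l.get.obj (l.tgt a (eqToHom h ≫ f.map u)) = f.obj d₁) :
    l.put a (eqToHom h ≫ f.map (u ≫ v)) ≍
      l.put a (eqToHom h ≫ f.map u) ≫
        l.put (l.tgt a (eqToHom h ≫ f.map u)) (eqToHom h' ≫ f.map v) := by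
  rw [f.map_comp, ← Category.assoc]
  exact l.putput _ _ _ _ (eqToHom_comp_heq _ _)

end Laws

variable {A : Type u₁} {B : Type u₂} {C : Type u₃} [Category.{v₁} A] [Category.{v₂} B]
  [Category.{v₃} C]

def comp (k : Lens A B) (l : Lens B C) : Lens A C where
  get := k.get ⋙ l.get
  tgt a _ u := k.tgt a (l.put (k.get.obj a) u)
  put a _ u := k.put a (l.put (k.get.obj a) u)
  obj_tgt a _ u := (congrArg l.get.obj (k.obj_tgt a _)).trans (l.obj_tgt _ u)
  putget a _ u := (l.get.map_heq_of_heq (k.obj_tgt a _) (k.putget a _)).trans (l.putget _ u)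
  tgt_id a := (k.tgt_congr rfl (l.tgt_id _) (l.getput _)).trans (k.tgt_id a)
  getput a := (k.put_congr rfl (l.tgt_id _) (l.getput _)).trans (k.getput a)
  tgt_comp a _ _ u v v' hv := by
    have hw := eqToHom_comp_heq v (l.obj_tgt _ u)
    have hvw := hv.trans hw.symm
    rw [k.tgt_congr rfl (l.tgt_comp _ u v _ hw) (l.putput _ u v _ hw)]
    exact k.tgt_comp' a _ _ _ (l.tgt_congr (k.obj_tgt a _) rfl hvw)
      (l.put_congr (k.obj_tgt a _) rfl hvw)
  putput a _ _ u v v' hv := by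
    have hw := eqToHom_comp_heq v (l.obj_tgt _ u)
    have hvw := hv.trans hw.symm
    exact (k.put_congr rfl (l.tgt_comp _ u v _ hw) (l.putput _ u v _ hw)).trans
      (k.putput' a _ _ _ (l.tgt_congr (k.obj_tgt a _) rfl hvw)
        (l.put_congr (k.obj_tgt a _) rfl hvw))

end Lens

section Pullback

variable {A B C : Type u} [Category.{v} A] [Category.{v} B] [Category.{v} C]

theorem PB.ext {f : A ⥤ B} {g : C ⥤ B} {x y : PB f g} (h₁ : x.1.1 = y.1.1)
    (h₂ : x.1.2 = y.1.2) : x = y :=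
  Subtype.ext (Prod.ext h₁ h₂)

theorem PBHom.hext {f : A ⥤ B} {g : C ⥤ B} {x y y' : PB f g} (hy : y = y') {m : x ⟶ y}
    {m' : x ⟶ y'} (h₁ : PBHom.m1 m ≍ PBHom.m1 m') (h₂ : PBHom.m2 m ≍ PBHom.m2 m') :
    m ≍ m' := by
  subst hy; exact heq_of_eq (PBHom.ext (eq_of_heq h₁) (eq_of_heq h₂))

theorem PB.proj₁_comp_eq_proj₂_comp (f : A ⥤ B) (g : C ⥤ B) :
    PB.proj₁ f g ⋙ f = PB.proj₂ f g ⋙ g := by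
  refine Functor.hext (fun x => x.2) fun x y m => ?_
  have hw := heq_of_eq m.w
  rwa [comp_eqToHom_heq_iff, heq_eqToHom_comp_iff] at hw

def Lens.pullbackFst (f : A ⥤ B) (l : Lens C B) : Lens (PB f l.get) A where
  get := PB.proj₁ f l.get
  tgt x a' u := ⟨(a', l.tgt x.1.2 (eqToHom x.2.symm ≫ f.map u)), (l.obj_tgt _ _).symm⟩
  put x a' u := ⟨u, l.put x.1.2 (eqToHom x.2.symm ≫ f.map u), by simp [l.map_put]⟩
  obj_tgt _ _ _ := rfl
  putget _ _ _ := HEq.rfl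
  tgt_id x := PB.ext rfl (l.tgt_eqToHom_comp_map_id f _ _)
  getput x := by
    refine PBHom.hext ?_ HEq.rfl ?_
    · exact PB.ext rfl (l.tgt_eqToHom_comp_map_id f _ _)
    · exact l.put_eqToHom_comp_map_id f _ _
  tgt_comp x _ _ u v v' hv := by
    obtain rfl := eq_of_heq hv
    exact PB.ext rfl (l.tgt_eqToHom_comp_map_comp f _ _ u _ _)
  putput x _ _ u v v' hv := by
    obtain rfl := eq_of_heq hv
    refine PBHom.hext ?_ HEq.rfl ?_
    · exact PB.ext rfl (l.tgt_eqToHom_comp_map_comp f _ _ u _ _)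
    · exact l.put_eqToHom_comp_map_comp f _ _ u _ _

def Lens.pullbackSnd (l : Lens A B) (g : C ⥤ B) : Lens (PB l.get g) C where
  get := PB.proj₂ l.get g
  tgt x c' u := ⟨(l.tgt x.1.1 (eqToHom x.2 ≫ g.map u), c'), l.obj_tgt _ _⟩
  put x c' u := ⟨l.put x.1.1 (eqToHom x.2 ≫ g.map u), u, by simp [l.map_put]⟩
  obj_tgt _ _ _ := rfl
  putget _ _ _ := HEq.rfl
  tgt_id x := PB.ext (l.tgt_eqToHom_comp_map_id g _ _) rfl
  getput x := by
    refine PBHom.hext ?_ ?_ HEq.rfl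
    · exact PB.ext (l.tgt_eqToHom_comp_map_id g _ _) rfl
    · exact l.put_eqToHom_comp_map_id g _ _
  tgt_comp x _ _ u v v' hv := by
    obtain rfl := eq_of_heq hv
    exact PB.ext (l.tgt_eqToHom_comp_map_comp g _ _ u _ _) rfl
  putput x _ _ u v v' hv := by
    obtain rfl := eq_of_heq hv
    refine PBHom.hext ?_ ?_ HEq.rfl
    · exact PB.ext (l.tgt_eqToHom_comp_map_comp g _ _ u _ _) rfl
    · exact l.put_eqToHom_comp_map_comp g _ _ u _ _

end Pullback

namespace Lens

variable {A B C : Type u} [Category.{v} A] [Category.{v} B] [Category.{v} C]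
  (l1 : Lens A B) (l2 : Lens C B) (x : PB l1.get l2.get) {b : B}
  {u1 : l1.get.obj x.1.1 ⟶ b} {u2 : l2.get.obj x.1.2 ⟶ b}

theorem pullbackFst_comp_tgt_snd (hu : u1 ≍ u2) :
    (((pullbackFst l1.get l2).comp l1).tgt x u1).1.2 = l2.tgt x.1.2 u2 :=
  l2.tgt_congr rfl (l1.obj_tgt _ u1) ((l1.eqToHom_comp_map_put_heq _ u1).trans hu)

theorem pullbackFst_comp_put_m2 (hu : u1 ≍ u2) :
    PBHom.m2 (((pullbackFst l1.get l2).comp l1).put x u1) ≍ l2.put x.1.2 u2 :=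
  l2.put_congr rfl (l1.obj_tgt _ u1) ((l1.eqToHom_comp_map_put_heq _ u1).trans hu)

theorem pullbackSnd_comp_tgt_fst (hu : u2 ≍ u1) :
    (((pullbackSnd l1 l2.get).comp l2).tgt x u2).1.1 = l1.tgt x.1.1 u1 :=
  l1.tgt_congr rfl (l2.obj_tgt _ u2) ((l2.eqToHom_comp_map_put_heq _ u2).trans hu)

theorem pullbackSnd_comp_put_m1 (hu : u2 ≍ u1) :
    PBHom.m1 (((pullbackSnd l1 l2.get).comp l2).put x u2) ≍ l1.put x.1.1 u1 :=
  l1.put_congr rfl (l2.obj_tgt _ u2) ((l2.eqToHom_comp_map_put_heq _ u2).trans hu)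

theorem pullbackFst_comp_tgt_eq (hu : u1 ≍ u2) :
    ((pullbackFst l1.get l2).comp l1).tgt x u1 = ((pullbackSnd l1 l2.get).comp l2).tgt x u2 :=
  PB.ext (pullbackSnd_comp_tgt_fst l1 l2 x hu.symm).symm (pullbackFst_comp_tgt_snd l1 l2 x hu)

theorem pullbackFst_comp_put_heq (hu : u1 ≍ u2) :
    ((pullbackFst l1.get l2).comp l1).put x u1 ≍ ((pullbackSnd l1 l2.get).comp l2).put x u2 :=
  PBHom.hext (pullbackFst_comp_tgt_eq l1 l2 x hu) (pullbackSnd_comp_put_m1 l1 l2 x hu.symm).symm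
    (pullbackFst_comp_put_m2 l1 l2 x hu)

end Lens

/-- Given a cospan of lenses `(f, φ) : A ⇌ B ⇋ C : (g, γ)`, the fake pullback square in
`Lens` commutes: there are projection lenses `(π₀, 1×γ) : A ×_B C ⇌ A` and
`(π₁, φ×1) : A ×_B C ⇌ C` (with the Puts described below), and a lens
`l : A ×_B C ⇌ B`, with Get `f ∘ π₀ = g ∘ π₁` and Put sending `(⟨a,c⟩, u)` to
`(φ(a,u), γ(c,u))`, which is simultaneously the composite of `(f, φ)` with the first
projection lens and the composite of `(g, γ)` with the second projection lens. -/
theorem fake_pullback_commutes {A B C : Type u} [Category.{v} A] [Category.{v} B]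
    [Category.{v} C] (l1 : Lens A B) (l2 : Lens C B) :
    ∃ (p0 : Lens (PB l1.get l2.get) A) (p1 : Lens (PB l1.get l2.get) C)
      (l : Lens (PB l1.get l2.get) B),
      -- the projection lenses
      p0.get = PB.proj₁ l1.get l2.get ∧
      p1.get = PB.proj₂ l1.get l2.get ∧
      -- Put of (π₀, 1×γ): the lift of (⟨a,c⟩, u : a ⟶ a') is (u, γ(c, f u))
      (∀ (x : PB l1.get l2.get) (a' : A) (u : p0.get.obj x ⟶ a')
        (u1 : x.1.1 ⟶ a'), HEq u1 u →
        (p0.tgt x u).1.1 = a' ∧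
        (p0.tgt x u).1.2 = l2.tgt x.1.2 (eqToHom x.2.symm ≫ l1.get.map u1) ∧
        HEq (PBHom.m1 (p0.put x u)) u1 ∧
        HEq (PBHom.m2 (p0.put x u)) (l2.put x.1.2 (eqToHom x.2.symm ≫ l1.get.map u1))) ∧
      -- Put of (π₁, φ×1): the lift of (⟨a,c⟩, w : c ⟶ c') is (φ(a, g w), w)
      (∀ (x : PB l1.get l2.get) (c' : C) (u : p1.get.obj x ⟶ c')
        (u2 : x.1.2 ⟶ c'), HEq u2 u →
        (p1.tgt x u).1.2 = c' ∧
        (p1.tgt x u).1.1 = l1.tgt x.1.1 (eqToHom x.2 ≫ l2.get.map u2) ∧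
        HEq (PBHom.m2 (p1.put x u)) u2 ∧
        HEq (PBHom.m1 (p1.put x u)) (l1.put x.1.1 (eqToHom x.2 ≫ l2.get.map u2))) ∧
      -- the common composite lens: Get
      l.get = p0.get ⋙ l1.get ∧
      l.get = p1.get ⋙ l2.get ∧
      -- the common composite lens: Put
      (∀ (x : PB l1.get l2.get) (b : B) (u : l.get.obj x ⟶ b)
        (u1 : l1.get.obj x.1.1 ⟶ b) (u2 : l2.get.obj x.1.2 ⟶ b), HEq u1 u → HEq u2 u →
        -- `l` is the composite of `l1` with the first projection lens
        (∀ w1 : p0.get.obj x ⟶ l1.tgt x.1.1 u1, HEq w1 (l1.put x.1.1 u1) →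
          l.tgt x u = p0.tgt x w1 ∧ HEq (l.put x u) (p0.put x w1)) ∧
        -- `l` is the composite of `l2` with the second projection lens
        (∀ w2 : p1.get.obj x ⟶ l2.tgt x.1.2 u2, HEq w2 (l2.put x.1.2 u2) →
          l.tgt x u = p1.tgt x w2 ∧ HEq (l.put x u) (p1.put x w2)) ∧
        -- and its Put is (φ(a, u), γ(c, u))
        (l.tgt x u).1.1 = l1.tgt x.1.1 u1 ∧ (l.tgt x u).1.2 = l2.tgt x.1.2 u2 ∧
        HEq (PBHom.m1 (l.put x u)) (l1.put x.1.1 u1) ∧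
        HEq (PBHom.m2 (l.put x u)) (l2.put x.1.2 u2)) := by
  refine ⟨Lens.pullbackFst l1.get l2, Lens.pullbackSnd l1 l2.get,
    (Lens.pullbackFst l1.get l2).comp l1, rfl, rfl, ?_, ?_, rfl,
    PB.proj₁_comp_eq_proj₂_comp _ _, ?_⟩
  · rintro x a' u u1 ⟨⟩
    exact ⟨rfl, rfl, HEq.rfl, HEq.rfl⟩
  · rintro x c' u u2 ⟨⟩
    exact ⟨rfl, rfl, HEq.rfl, HEq.rfl⟩
  · intro x b u u1 u2 hu1 hu2
    obtain rfl := eq_of_heq hu1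
    have hu : u1 ≍ u2 := hu2.symm
    refine ⟨fun w1 hw1 => ?_, fun w2 hw2 => ?_, rfl, Lens.pullbackFst_comp_tgt_snd l1 l2 x hu,
      HEq.rfl, Lens.pullbackFst_comp_put_m2 l1 l2 x hu⟩
    · obtain rfl := eq_of_heq hw1
      exact ⟨rfl, HEq.rfl⟩
    · obtain rfl := eq_of_heq hw2
      exact ⟨Lens.pullbackFst_comp_tgt_eq l1 l2 x hu, Lens.pullbackFst_comp_put_heq l1 l2 x hu⟩
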